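/- Lower bound for the nearest-neighbor probability via a virtual point object on the boundary of the known region: let q_s, q, c_i be points of the plane, r > 0, r_i > 0, let X be uniformly distributed on the closed ball B̄(c_i,r_i) (law U(c_i,r_i)), and let W be any random point whose law ν satisfies ν(Metric.ball q_s r) = 0 (the object lies outside the known region of radius r around q_s). Then (U(c_i,r_i) ⊗ ν) {(u,w) | dist(u,q) < dist(w,q)} ≥ U(c_i,r_i) {u | dist(u,q) < r − dist(q,q_s)}; that is, the probability that o_i is nearer to q than the unknown outside object is at least the probability that the distance from the uniform point of o_i to q is less than r − dist(q,q_s). -/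

import Mathlib

open MeasureTheory
open scoped ENNReal

/-- The uniform probability measure on the closed ball of center `c` and radius `r`
in the Euclidean plane. -/
noncomputable def unifBall (c : EuclideanSpace ℝ (Fin 2)) (r : ℝ) :
    Measure (EuclideanSpace ℝ (Fin 2)) :=
  (volume (Metric.closedBall c r))⁻¹ • volume.restrict (Metric.closedBall c r)

/-! By the triangle inequality every point outside `ball qs r` is at distance at least
`r - dist q qs` from `q` (the distance of a virtual object on the boundary). Hence the event
`dist u q < dist w q` contains the rectangle `{u | dist u q < r - dist q qs} ×ˢ (ball qs r)ᶜ`,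
whose second factor has full `ν`-measure. -/

theorem sub_dist_le_dist_of_notMem_ball {X : Type*} [PseudoMetricSpace X] {qs q w : X} {r : ℝ}
    (hw : w ∉ Metric.ball qs r) : r - dist q qs ≤ dist w q := by
  have hrw : r ≤ dist w qs := not_lt.mp hw
  linarith [dist_triangle w q qs]

theorem MeasureTheory.Measure.le_prod_of_prod_subset {α β : Type*}
    [MeasurableSpace α] [MeasurableSpace β]
    {μ : Measure α} {ν : Measure β} [IsProbabilityMeasure ν] {S : Set (α × β)}
    {s : Set α} {t : Set β} (ht : ν tᶜ = 0) (hsub : s ×ˢ t ⊆ S) : μ s ≤ μ.prod ν S := by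
  have hνt : ν t = 1 := by rw [measure_congr (ae_eq_univ.mpr ht), measure_univ]
  calc μ s = μ.prod ν (s ×ˢ t) := by rw [Measure.prod_prod, hνt, mul_one]
    _ ≤ μ.prod ν S := measure_mono hsub

theorem lower_bound_via_virtual_object_general
    (qs q cᵢ : EuclideanSpace ℝ (Fin 2)) (r rᵢ : ℝ)
    (ν : Measure (EuclideanSpace ℝ (Fin 2))) [IsProbabilityMeasure ν]
    (hν : ν (Metric.ball qs r) = 0) :
    ((unifBall cᵢ rᵢ).prod ν)
        {uw : EuclideanSpace ℝ (Fin 2) × EuclideanSpace ℝ (Fin 2) |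
          dist uw.1 q < dist uw.2 q}
      ≥ unifBall cᵢ rᵢ {u : EuclideanSpace ℝ (Fin 2) | dist u q < r - dist q qs} := by
  refine Measure.le_prod_of_prod_subset (t := (Metric.ball qs r)ᶜ) (by rwa [compl_compl]) ?_
  rintro ⟨u, w⟩ ⟨hu, hw⟩
  exact lt_of_lt_of_le hu (sub_dist_le_dist_of_notMem_ball hw)

theorem lower_bound_via_virtual_object
    (qs q cᵢ : EuclideanSpace ℝ (Fin 2)) (r rᵢ : ℝ)
    (hr : 0 < r) (hrᵢ : 0 < rᵢ)
    (ν : Measure (EuclideanSpace ℝ (Fin 2))) [IsProbabilityMeasure ν]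
    (hν : ν (Metric.ball qs r) = 0) :
    ((unifBall cᵢ rᵢ).prod ν)
        {uw : EuclideanSpace ℝ (Fin 2) × EuclideanSpace ℝ (Fin 2) |
          dist uw.1 q < dist uw.2 q}
      ≥ unifBall cᵢ rᵢ {u : EuclideanSpace ℝ (Fin 2) | dist u q < r - dist q qs} :=
  lower_bound_via_virtual_object_general qs q cᵢ r rᵢ ν hν
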